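/- Let (M₁, M₂) and (N₁, N₂) be two-outcome POVMs on ℂ^d. Let φ ∈ ℂ^d be a unit eigenvector of the Hermitian matrix M₁ − N₁ whose eigenvalue λ₁ has the largest absolute value among all eigenvalues of M₁ − N₁, let D ≥ 1, and let ψ ∈ ℂ^D be any unit vector. Then for the product state ρ = (φφ†) ⊗ (ψψ†), the matrices T_μ = Tr_S[((M_μ − N_μ) ⊗ I_D) ρ] satisfy ‖T₁‖_* + ‖T₂‖_* = 2|λ₁|; that is, the upper bound on the stabilized distinguishability of the two POVM channels is achieved by a separable (product) input state. -/

import Mathlib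

open Matrix Kronecker
open scoped ComplexOrder

/-- The trace norm (nuclear norm) of a complex matrix: the trace of `√(Mᴴ M)`,
which equals the sum of the singular values of `M`. -/
noncomputable def traceNorm {n : Type*} [Fintype n] [DecidableEq n]
    (M : Matrix n n ℂ) : ℝ :=
  (((Matrix.posSemidef_conjTranspose_mul_self M).1.eigenvectorUnitary : Matrix n n ℂ) *
      diagonal (((↑) : ℝ → ℂ) ∘ Real.sqrt ∘ (Matrix.posSemidef_conjTranspose_mul_self M).1.eigenvalues) *
      star ((Matrix.posSemidef_conjTranspose_mul_self M).1.eigenvectorUnitary : Matrix n n ℂ)).trace.re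

/-- `partialTraceS X ρ = Tr_S[(X ⊗ I) ρ]`: the `D × D` matrix with entries
`(T)_{ab} = ∑ i j, X_{ji} ρ_{(i,a),(j,b)}`, the partial trace over the system factor. -/
noncomputable def partialTraceS {d D : ℕ} (X : Matrix (Fin d) (Fin d) ℂ)
    (ρ : Matrix (Fin d × Fin D) (Fin d × Fin D) ℂ) : Matrix (Fin D) (Fin D) ℂ :=
  Matrix.of fun a b => ∑ i, ∑ j, X j i * ρ (i, a) (j, b)

/-! On the product state `ρ = φφ† ⊗ ψψ†`, the partial trace `Tr_S[(X ⊗ I) ρ]` equals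
`⟨φ, X φ⟩ • ψψ†`. Since `M₂ − N₂ = −(M₁ − N₁)`, the two blocks are `±λ₁ • ψψ†`, and a real
multiple `c • ψψ†` of a rank-one projection has trace norm `|c|`, its square root
`√((c • ψψ†)ᴴ (c • ψψ†))` being `|c| • ψψ†`. -/

open scoped MatrixOrder in
theorem traceNorm_eq_re_trace_of_sq_eq {n : Type*} [Fintype n] [DecidableEq n]
    {M A : Matrix n n ℂ} (hA : A.PosSemidef) (hsq : A ^ 2 = Mᴴ * M) :
    traceNorm M = A.trace.re := by
  have hsqrt : (posSemidef_conjTranspose_mul_self M).1.cfc Real.sqrt = A := by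
    rw [← IsHermitian.cfc_eq, ← cfcₙ_eq_cfc (hf0 := Real.sqrt_zero),
      ← CFC.sqrt_eq_real_sqrt _ (posSemidef_conjTranspose_mul_self M).nonneg, ← hsq,
      CFC.sqrt_sq _ hA.nonneg]
  -- `traceNorm M` unfolds to `((Mᴴ * M).IsHermitian).cfc Real.sqrt` traced.
  rw [← hsqrt]
  rfl

theorem traceNorm_smul_vecMulVec_star_of_unit {n : Type*} [Fintype n] [DecidableEq n]
    (c : ℝ) {ψ : n → ℂ} (hψ : star ψ ⬝ᵥ ψ = 1) :
    traceNorm ((c : ℂ) • vecMulVec ψ (star ψ)) = |c| := by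
  set P := vecMulVec ψ (star ψ)
  have hP : P * P = P := by rw [vecMulVec_mul_vecMulVec, hψ, one_smul]
  have hA : (((|c| : ℝ) : ℂ) • P).PosSemidef :=
    (posSemidef_vecMulVec_self_star ψ).smul (by exact_mod_cast abs_nonneg c)
  have hsq : (((|c| : ℝ) : ℂ) • P) ^ 2 = ((c : ℂ) • P)ᴴ * ((c : ℂ) • P) := by
    rw [sq, conjTranspose_smul, conjTranspose_vecMulVec, star_star, smul_mul_smul, hP,
      smul_mul_smul, hP, RCLike.star_def, Complex.conj_ofReal, ← Complex.ofReal_mul,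
      ← Complex.ofReal_mul, abs_mul_abs_self]
  rw [traceNorm_eq_re_trace_of_sq_eq hA hsq, trace_smul, trace_vecMulVec, dotProduct_comm, hψ,
    smul_eq_mul, mul_one, Complex.ofReal_re]

theorem partialTraceS_kronecker {d D : ℕ} (X A : Matrix (Fin d) (Fin d) ℂ)
    (B : Matrix (Fin D) (Fin D) ℂ) :
    partialTraceS X (A ⊗ₖ B) = (X * A).trace • B := by
  ext a b
  simp only [partialTraceS, of_apply, kroneckerMap_apply, Matrix.smul_apply, smul_eq_mul, trace,
    diag_apply, mul_apply, Finset.sum_mul]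
  rw [Finset.sum_comm]
  refine Finset.sum_congr rfl fun _ _ => Finset.sum_congr rfl fun _ _ => ?_
  ring

theorem trace_mul_vecMulVec_star_of_mulVec_eq {n : Type*} [Fintype n]
    {X : Matrix n n ℂ} {φ : n → ℂ} {c : ℂ} (hφ : star φ ⬝ᵥ φ = 1) (hXφ : X *ᵥ φ = c • φ) :
    (X * vecMulVec φ (star φ)).trace = c := by
  rw [mul_vecMulVec, trace_vecMulVec, hXφ, smul_dotProduct, dotProduct_comm, hφ, smul_eq_mul,
    mul_one]

theorem traceNorm_partialTrace_add_eq_of_product_eigvec_general {d D : ℕ}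
    (M₁ M₂ N₁ N₂ : Matrix (Fin d) (Fin d) ℂ)
    (hMsum : M₁ + M₂ = 1)
    (hNsum : N₁ + N₂ = 1)
    (φ : Fin d → ℂ) (hφ : star φ ⬝ᵥ φ = 1)
    (lam₁ : ℝ) (hEig : (M₁ - N₁) *ᵥ φ = (lam₁ : ℂ) • φ)
    (ψ : Fin D → ℂ) (hψ : star ψ ⬝ᵥ ψ = 1)
    (ρ : Matrix (Fin d × Fin D) (Fin d × Fin D) ℂ)
    (hρ : ρ = Matrix.vecMulVec φ (star φ) ⊗ₖ Matrix.vecMulVec ψ (star ψ)) :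
    traceNorm (partialTraceS (M₁ - N₁) ρ) + traceNorm (partialTraceS (M₂ - N₂) ρ) =
      2 * |lam₁| := by
  have hcompl : M₂ - N₂ = -(M₁ - N₁) := by
    rw [eq_sub_of_add_eq' hMsum, eq_sub_of_add_eq' hNsum]; abel
  have hEig₂ : (M₂ - N₂) *ᵥ φ = ((-lam₁ : ℝ) : ℂ) • φ := by
    rw [hcompl, neg_mulVec, hEig, Complex.ofReal_neg, neg_smul]
  rw [hρ, partialTraceS_kronecker, partialTraceS_kronecker,
    trace_mul_vecMulVec_star_of_mulVec_eq hφ hEig, trace_mul_vecMulVec_star_of_mulVec_eq hφ hEig₂,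
    traceNorm_smul_vecMulVec_star_of_unit _ hψ, traceNorm_smul_vecMulVec_star_of_unit _ hψ, abs_neg]
  ring

/-- For two-outcome POVMs `(M₁, M₂)` and `(N₁, N₂)` on `ℂ^d`, if `φ` is a unit eigenvector of
the Hermitian matrix `M₁ − N₁` whose eigenvalue `λ₁` has the largest absolute value among
all eigenvalues, and `ψ ∈ ℂ^D` is any unit vector, then the product state
`ρ = (φφ†) ⊗ (ψψ†)` achieves `‖T₁‖_* + ‖T₂‖_* = 2|λ₁|` for the blocks
`T_μ = Tr_S[((M_μ − N_μ) ⊗ I) ρ]`: the bound on the stabilized distinguishability is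
achieved by a separable input state. -/
theorem traceNorm_partialTrace_add_eq_of_product_eigvec {d D : ℕ} (hD : 1 ≤ D)
    (M₁ M₂ N₁ N₂ : Matrix (Fin d) (Fin d) ℂ)
    (hM₁ : M₁.PosSemidef) (hM₂ : M₂.PosSemidef) (hMsum : M₁ + M₂ = 1)
    (hN₁ : N₁.PosSemidef) (hN₂ : N₂.PosSemidef) (hNsum : N₁ + N₂ = 1)
    (φ : Fin d → ℂ) (hφ : star φ ⬝ᵥ φ = 1)
    (lam₁ : ℝ) (hEig : (M₁ - N₁) *ᵥ φ = (lam₁ : ℂ) • φ)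
    (hMax : ∀ k, |(hM₁.1.sub hN₁.1).eigenvalues k| ≤ |lam₁|)
    (ψ : Fin D → ℂ) (hψ : star ψ ⬝ᵥ ψ = 1)
    (ρ : Matrix (Fin d × Fin D) (Fin d × Fin D) ℂ)
    (hρ : ρ = Matrix.vecMulVec φ (star φ) ⊗ₖ Matrix.vecMulVec ψ (star ψ)) :
    traceNorm (partialTraceS (M₁ - N₁) ρ) + traceNorm (partialTraceS (M₂ - N₂) ρ) =
      2 * |lam₁| :=
  traceNorm_partialTrace_add_eq_of_product_eigvec_general M₁ M₂ N₁ N₂ hMsum hNsum φ hφ lam₁ hEig ψ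
    hψ ρ hρ
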